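/- Let N ≥ 1 and let ρ : ℝ^N → ℝ be a C³ function with ρ(x) > 0 for all x. Then for every x ∈ ℝ^N and every j ∈ {1, …, N}: ρ(x) ( ∂_j(Δ(ln ρ))(x) + ½ ∂_j(|∇(ln ρ)|²)(x) ) = Σ_{i=1}^N ∂_i( ρ ∂_i∂_j(ln ρ) )(x). Consequently, for κ(ρ) = κ̄/ρ the Korteweg tensor divergence can be written in divergence form: div K = κ̄ div( ρ ∇∇(ln ρ) ). -/

import Mathlib

/-!
Write `L = ln ρ`, so that `∂ᵢρ = ρ ∂ᵢL`. By the product rule,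
`Σᵢ ∂ᵢ(ρ ∂ᵢ∂ⱼL) = ρ Σᵢ (∂ᵢL ∂ᵢ∂ⱼL + ∂ᵢ∂ᵢ∂ⱼL)`, and after commuting
derivatives (ρ is C³) this is `ρ (∂ⱼΔL + ½ ∂ⱼ|∇L|²)`. For `κ = κ̄/ρ` the
scalar part of the Korteweg tensor collapses to `κ̄ Δρ`, while
`ρ ∂ᵢ∂ⱼL = ∂ᵢ∂ⱼρ - ∂ᵢρ ∂ⱼρ / ρ`; hence both `div K` and `κ̄ div(ρ ∇∇L)`
equal `κ̄ Σᵢ ∂ᵢ(∂ᵢ∂ⱼρ - ∂ᵢρ ∂ⱼρ / ρ)`.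
-/

open Real

/-- The `i`-th partial derivative of a function on `ℝ^N`. -/
noncomputable def pd {N : ℕ} (i : Fin N) (f : (Fin N → ℝ) → ℝ) : (Fin N → ℝ) → ℝ :=
  fun x => fderiv ℝ f x (Pi.single i 1)

/-- The Laplacian on `ℝ^N`. -/
noncomputable def lap {N : ℕ} (f : (Fin N → ℝ) → ℝ) : (Fin N → ℝ) → ℝ :=
  fun x => ∑ i, pd i (pd i f) x

/-- The squared norm of the gradient, `|∇f|²`. -/
noncomputable def gradsq {N : ℕ} (f : (Fin N → ℝ) → ℝ) : (Fin N → ℝ) → ℝ :=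
  fun x => ∑ i, (pd i f x) ^ 2

section PartialDerivatives

variable {N : ℕ} {f g : (Fin N → ℝ) → ℝ} {x : Fin N → ℝ} {i j : Fin N}

theorem contDiff_pd {n m : WithTop ℕ∞} (hf : ContDiff ℝ n f) (h : m + 1 ≤ n) (i : Fin N) :
    ContDiff ℝ m (pd i f) :=
  (hf.fderiv_right h).clm_apply contDiff_const

theorem differentiable_pd (hf : ContDiff ℝ 2 f) (i : Fin N) : Differentiable ℝ (pd i f) :=
  (contDiff_pd hf (m := 1) (by norm_num) i).differentiable (by norm_num)

theorem differentiable_pd_pd (hf : ContDiff ℝ 3 f) (i j : Fin N) :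
    Differentiable ℝ (pd i (pd j f)) :=
  differentiable_pd (contDiff_pd hf (by norm_num) j) i

theorem pd_mul (hf : DifferentiableAt ℝ f x) (hg : DifferentiableAt ℝ g x) :
    pd i (fun y => f y * g y) x = pd i f x * g x + f x * pd i g x := by
  simp [pd, fderiv_fun_mul hf hg]
  ring

theorem pd_const_mul (hf : DifferentiableAt ℝ f x) (c : ℝ) :
    pd i (fun y => c * f y) x = c * pd i f x := by
  simp [pd, fderiv_const_mul hf c]

theorem pd_sub (hf : DifferentiableAt ℝ f x) (hg : DifferentiableAt ℝ g x) :
    pd i (fun y => f y - g y) x = pd i f x - pd i g x := by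
  simp [pd, fderiv_fun_sub hf hg]

theorem pd_sum {ι : Type*} (s : Finset ι) {F : ι → (Fin N → ℝ) → ℝ}
    (hF : ∀ k ∈ s, DifferentiableAt ℝ (F k) x) :
    pd i (fun y => ∑ k ∈ s, F k y) x = ∑ k ∈ s, pd i (F k) x := by
  simp [pd, fderiv_fun_sum hF]

theorem pd_pow_two (hf : DifferentiableAt ℝ f x) :
    pd i (fun y => f y ^ 2) x = 2 * f x * pd i f x := by
  simp only [sq, pd_mul hf hf]
  ring

theorem pd_comp {φ : ℝ → ℝ} {φ' : ℝ} (hφ : HasDerivAt φ φ' (f x))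
    (hf : DifferentiableAt ℝ f x) :
    pd i (fun y => φ (f y)) x = φ' * pd i f x := by
  simp [pd, ← Function.comp_def, (hφ.comp_hasFDerivAt x hf.hasFDerivAt).fderiv]

theorem pd_log (hf : DifferentiableAt ℝ f x) (hx : f x ≠ 0) :
    pd i (fun y => log (f y)) x = pd i f x / f x := by
  rw [pd_comp (hasDerivAt_log hx) hf, inv_mul_eq_div]

theorem pd_div (hf : DifferentiableAt ℝ f x) (hg : DifferentiableAt ℝ g x) (hx : g x ≠ 0) :
    pd i (fun y => f y / g y) x = (pd i f x * g x - f x * pd i g x) / g x ^ 2 := by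
  simp only [div_eq_mul_inv]
  rw [pd_mul hf (hg.fun_inv hx), pd_comp (φ := fun t => t⁻¹) (hasDerivAt_inv hx) hg]
  field_simp
  ring

theorem pd_comm (hf : ContDiff ℝ 2 f) : pd i (pd j f) x = pd j (pd i f) x := by
  have hd : DifferentiableAt ℝ (fderiv ℝ f) x :=
    (hf.fderiv_right (m := 1) le_rfl).differentiable (by norm_num) x
  have pd_fderiv (k : Fin N) (v : Fin N → ℝ) :
      pd k (fun y => fderiv ℝ f y v) x = fderiv ℝ (fderiv ℝ f) x (Pi.single k 1) v := by
    simp [pd, fderiv_clm_apply hd (differentiableAt_const v)]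
  calc pd i (pd j f) x
      = fderiv ℝ (fderiv ℝ f) x (Pi.single i 1) (Pi.single j 1) := pd_fderiv i _
    _ = fderiv ℝ (fderiv ℝ f) x (Pi.single j 1) (Pi.single i 1) :=
      hf.contDiffAt.isSymmSndFDerivAt (by norm_num) _ _
    _ = pd j (pd i f) x := (pd_fderiv j _).symm

theorem pd_pd_pd_comm (hf : ContDiff ℝ 3 f) :
    pd j (pd i (pd i f)) x = pd i (pd i (pd j f)) x := by
  rw [show pd i (pd j f) = pd j (pd i f) from funext fun _ => pd_comm (hf.of_le (by norm_num))]
  exact (pd_comm (contDiff_pd hf (by norm_num) i)).symm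

theorem pd_lap (hf : ContDiff ℝ 3 f) : pd j (lap f) x = ∑ i, pd i (pd i (pd j f)) x := by
  unfold lap
  rw [pd_sum _ fun k _ => differentiable_pd_pd hf k k x]
  exact Finset.sum_congr rfl fun _ _ => pd_pd_pd_comm hf

theorem differentiable_lap (hf : ContDiff ℝ 3 f) : Differentiable ℝ (lap f) :=
  Differentiable.fun_sum fun k _ => differentiable_pd_pd hf k k

theorem pd_gradsq (hf : ContDiff ℝ 2 f) :
    pd j (gradsq f) x = ∑ i, 2 * pd i f x * pd i (pd j f) x := by
  unfold gradsq
  rw [pd_sum _ fun k _ => (differentiable_pd hf k x).fun_pow 2]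
  exact Finset.sum_congr rfl fun k _ => by rw [pd_pow_two (differentiable_pd hf k x), pd_comm hf]

end PartialDerivatives

section LogDensity

variable {N : ℕ} {ρ : (Fin N → ℝ) → ℝ}

theorem sum_pd_mul_pd_pd_log (hρ : ContDiff ℝ 3 ρ) (hρ0 : ∀ y, ρ y ≠ 0)
    (x : Fin N → ℝ) (j : Fin N) :
    ∑ i, pd i (fun y => ρ y * pd i (pd j (fun z => log (ρ z))) y) x
      = ρ x * (pd j (lap (fun y => log (ρ y))) x
          + 1 / 2 * pd j (gradsq (fun y => log (ρ y))) x) := by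
  have hL : ContDiff ℝ 3 (fun y => log (ρ y)) := hρ.log hρ0
  have hρd : Differentiable ℝ ρ := hρ.differentiable (by norm_num)
  rw [pd_lap hL, pd_gradsq (hL.of_le (by norm_num)), Finset.mul_sum, ← Finset.sum_add_distrib,
    Finset.mul_sum]
  refine Finset.sum_congr rfl fun i _ => ?_
  rw [pd_mul (hρd x) (differentiable_pd_pd hL i j x), pd_log (hρd x) (hρ0 x)]
  field_simp [hρ0 x]
  ring

theorem mul_pd_pd_log (hρ : ContDiff ℝ 2 ρ) (hρ0 : ∀ y, ρ y ≠ 0) (i j : Fin N) :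
    (fun y => ρ y * pd i (pd j (fun z => log (ρ z))) y)
      = fun y => pd i (pd j ρ) y - pd i ρ y * pd j ρ y / ρ y := by
  have hρd : Differentiable ℝ ρ := hρ.differentiable (by norm_num)
  have hjL : pd j (fun z => log (ρ z)) = fun z => pd j ρ z / ρ z :=
    funext fun z => pd_log (hρd z) (hρ0 z)
  funext y
  rw [hjL, pd_div (differentiable_pd hρ j y) (hρd y) (hρ0 y)]
  field_simp [hρ0 y]

end LogDensity

theorem korteweg_divergenceForm_general (N : ℕ)
    (ρ : (Fin N → ℝ) → ℝ) (hρ : ContDiff ℝ 3 ρ) (hpos : ∀ x, 0 < ρ x)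
    (x : Fin N → ℝ) (j : Fin N) :
    (ρ x * (pd j (lap (fun y => Real.log (ρ y))) x
        + (1 / 2) * pd j (gradsq (fun y => Real.log (ρ y))) x)
      = ∑ i, pd i (fun y => ρ y * pd i (pd j (fun z => Real.log (ρ z))) y) x) ∧
    (∀ κb : ℝ, 0 < κb →
      pd j (fun y => ρ y * (κb / ρ y) * lap ρ y
          + (1 / 2) * ((κb / ρ y) + ρ y * (-κb / (ρ y) ^ 2)) * gradsq ρ y) x
        - ∑ i, pd i (fun y => (κb / ρ y) * pd i ρ y * pd j ρ y) x
      = κb * ∑ i, pd i (fun y => ρ y * pd i (pd j (fun z => Real.log (ρ z))) y) x) := by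
  have hρ0 (y : Fin N → ℝ) : ρ y ≠ 0 := (hpos y).ne'
  refine ⟨(sum_pd_mul_pd_pd_log hρ hρ0 x j).symm, fun κb _ => ?_⟩
  have hpdρ (k : Fin N) : Differentiable ℝ (pd k ρ) :=
    differentiable_pd (hρ.of_le (by norm_num)) k
  have hquot (i : Fin N) : Differentiable ℝ fun y => pd i ρ y * pd j ρ y / ρ y := by
    simpa only [div_eq_mul_inv] using
      ((hpdρ i).fun_mul (hpdρ j)).fun_mul ((hρ.differentiable (by norm_num)).fun_inv hρ0)
  have scalar_part : (fun y => ρ y * (κb / ρ y) * lap ρ y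
      + (1 / 2) * ((κb / ρ y) + ρ y * (-κb / (ρ y) ^ 2)) * gradsq ρ y)
      = fun y => κb * lap ρ y := by
    funext y
    field_simp [hρ0 y]
    ring
  rw [scalar_part, pd_const_mul (differentiable_lap hρ x), pd_lap hρ, Finset.mul_sum, Finset.mul_sum,
    ← Finset.sum_sub_distrib]
  refine Finset.sum_congr rfl fun i _ => ?_
  rw [mul_pd_pd_log (hρ.of_le (by norm_num)) hρ0,
    pd_sub (differentiable_pd_pd hρ i j x) (hquot i x),
    show (fun y => κb / ρ y * pd i ρ y * pd j ρ y)
        = fun y => κb * (pd i ρ y * pd j ρ y / ρ y) from funext fun y => by ring,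
    pd_const_mul (hquot i x)]
  ring

/-- `ρ ( ∂_j Δ(ln ρ) + ½ ∂_j |∇(ln ρ)|² ) = Σ_i ∂_i( ρ ∂_i∂_j(ln ρ) )`; consequently, for
`κ(ρ) = κ̄/ρ`, the Korteweg tensor divergence is in divergence form:
`div K = κ̄ div(ρ ∇∇ ln ρ)`. -/
theorem korteweg_divergenceForm (N : ℕ) (hN : 1 ≤ N)
    (ρ : (Fin N → ℝ) → ℝ) (hρ : ContDiff ℝ 3 ρ) (hpos : ∀ x, 0 < ρ x)
    (x : Fin N → ℝ) (j : Fin N) :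
    (ρ x * (pd j (lap (fun y => Real.log (ρ y))) x
        + (1 / 2) * pd j (gradsq (fun y => Real.log (ρ y))) x)
      = ∑ i, pd i (fun y => ρ y * pd i (pd j (fun z => Real.log (ρ z))) y) x) ∧
    (∀ κb : ℝ, 0 < κb →
      pd j (fun y => ρ y * (κb / ρ y) * lap ρ y
          + (1 / 2) * ((κb / ρ y) + ρ y * (-κb / (ρ y) ^ 2)) * gradsq ρ y) x
        - ∑ i, pd i (fun y => (κb / ρ y) * pd i ρ y * pd j ρ y) x
      = κb * ∑ i, pd i (fun y => ρ y * pd i (pd j (fun z => Real.log (ρ z))) y) x) :=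
  korteweg_divergenceForm_general N ρ hρ hpos x j
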